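/- arXiv:2604.23987 — 2 statements merged into one kernel-verified Lean document; each statement's English description precedes it below -/
import Mathlib

section
/- Let P₁ and P_k be probability measures on a measurable space 𝒳, let s₁, s_k : 𝒳 → ℝ be measurable with |s₁(x) − s_k(x)| ≤ η for all x ∈ 𝒳 (η ≥ 0), and suppose the CDF t ↦ P₁({x : s₁(x) ≤ t}) is M-Lipschitz on ℝ. Then for every α ∈ (0,1) and every q ∈ ℝ with P₁({x : s₁(x) ≤ q}) ≥ 1 − α, one has (1 − α) − P_k({x : s_k(x) ≤ q}) ≤ M·η + TV(P₁, P_k). -/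
open MeasureTheory Set

/-- Total variation distance between two measures:
`TV(P, Q) = sup over measurable sets A of |P(A) - Q(A)|`. -/
noncomputable def tvDist {Ω : Type*} [MeasurableSpace Ω] (P Q : Measure Ω) : ℝ :=
  ⨆ A : {A : Set Ω // MeasurableSet A}, |(P A.1).toReal - (Q A.1).toReal|

/-- **Coverage drift decomposition (Corollary 1).**
If the scores `s₁, s_k` differ pointwise by at most `η`, the CDF of `s₁` under `P₁` is
`M`-Lipschitz, and the threshold `q` achieves coverage `1 - α` under `(s₁, P₁)`, then the
coverage shortfall under `(s_k, P_k)` is at most `M·η + TV(P₁, P_k)`. -/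
theorem coverage_drift_decomposition
    {𝒳 : Type*} [MeasurableSpace 𝒳] (P₁ Pk : Measure 𝒳)
    [IsProbabilityMeasure P₁] [IsProbabilityMeasure Pk]
    (s₁ sk : 𝒳 → ℝ) (hs₁ : Measurable s₁) (hsk : Measurable sk)
    (η : ℝ) (hη : 0 ≤ η) (hclose : ∀ x, |s₁ x - sk x| ≤ η)
    (M : ℝ)
    (hLip : ∀ s t : ℝ,
      |(P₁ {x | s₁ x ≤ s}).toReal - (P₁ {x | s₁ x ≤ t}).toReal| ≤ M * |s - t|)
    (α : ℝ) (hα : α ∈ Ioo (0 : ℝ) 1) (q : ℝ)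
    (hcov : 1 - α ≤ (P₁ {x | s₁ x ≤ q}).toReal) :
    (1 - α) - (Pk {x | sk x ≤ q}).toReal ≤ M * η + tvDist P₁ Pk := by
  set A : Set 𝒳 := {x | s₁ x ≤ q - η} with hA
  set B : Set 𝒳 := {x | sk x ≤ q} with hB
  have hBmeas : MeasurableSet B := measurableSet_le hsk measurable_const
  have hsub : A ⊆ B := by
    intro x hx
    have h1 : s₁ x ≤ q - η := hx
    have h2 := abs_le.mp (hclose x)
    show sk x ≤ q
    linarith [h2.1, h2.2]
  -- Lipschitz step
  have hlip := hLip (q - η) q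
  have habs : |q - η - q| = η := by
    rw [show q - η - q = -η by ring, abs_neg, abs_of_nonneg hη]
  rw [habs] at hlip
  have hlip' : (P₁ {x | s₁ x ≤ q}).toReal - (P₁ A).toReal ≤ M * η := by
    have := abs_le.mp hlip
    linarith [this.1]
  -- monotonicity
  have hmono : (P₁ A).toReal ≤ (P₁ B).toReal :=
    ENNReal.toReal_mono (measure_ne_top _ _) (measure_mono hsub)
  -- TV step
  have hbdd : BddAbove (Set.range fun A : {A : Set 𝒳 // MeasurableSet A} =>
      |(P₁ A.1).toReal - (Pk A.1).toReal|) := by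
    refine ⟨1, ?_⟩
    rintro y ⟨C, rfl⟩
    have h1 : (P₁ C.1).toReal ≤ 1 := by
      have := prob_le_one (μ := P₁) (s := C.1)
      simpa using ENNReal.toReal_mono (by simp) this
    have h2 : (Pk C.1).toReal ≤ 1 := by
      have := prob_le_one (μ := Pk) (s := C.1)
      simpa using ENNReal.toReal_mono (by simp) this
    have h3 : 0 ≤ (P₁ C.1).toReal := ENNReal.toReal_nonneg
    have h4 : 0 ≤ (Pk C.1).toReal := ENNReal.toReal_nonneg
    rw [abs_le]
    constructor <;> linarith
  have htv : (P₁ B).toReal - (Pk B).toReal ≤ tvDist P₁ Pk := by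
    have := le_ciSup hbdd ⟨B, hBmeas⟩
    calc (P₁ B).toReal - (Pk B).toReal ≤ |(P₁ B).toReal - (Pk B).toReal| := le_abs_self _
      _ ≤ tvDist P₁ Pk := this
  linarith
end

section
/- Let α ∈ (0,1) and m ≥ 1 be such that k := ⌈(m + 1)(1 − α)⌉ ≤ m. Let S₁, …, S_{m+1} be exchangeable real random variables whose values are almost surely pairwise distinct, and let q̂ be the k-th order statistic of S₁, …, S_m. Then P(S_{m+1} ≤ q̂) = k/(m + 1); in particular 1 − α ≤ P(S_{m+1} ≤ q̂) < 1 − α + 1/(m + 1). -/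
open MeasureTheory

/-- A finite family of real random variables is exchangeable if the joint law of the vector
is invariant under every permutation of the indices. -/
def Exchangeable {Ω : Type*} [MeasurableSpace Ω] (ℙ : Measure Ω) {n : ℕ}
    (S : Fin n → Ω → ℝ) : Prop :=
  ∀ σ : Equiv.Perm (Fin n),
    Measure.map (fun ω => fun i => S (σ i) ω) ℙ = Measure.map (fun ω => fun i => S i ω) ℙ

/-- The `k`-th order statistic (1-indexed) of the values `s 0, …, s (m-1)`:
the `k`-th smallest value when sorted in nondecreasing order. -/
noncomputable def orderStat {m : ℕ} (s : Fin m → ℝ) (k : ℕ) : ℝ :=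
  (Multiset.sort (Multiset.map s Finset.univ.val) (· ≤ ·)).getD (k - 1) 0

/-!
Write `rank v j` for the number of coordinates of `v` strictly below `v j`. Deterministically,
`v (last) ≤ q̂` iff fewer than `k` of the calibration scores lie below `v (last)`, i.e. iff
`rank v last < k`. When the scores are distinct, `rank v` is a bijection onto `{0, …, m}`, so
exactly `k` indices `j` satisfy `rank v j < k`; taking expectations, the probabilities
`P(rank S j < k)` sum to `k`, and exchangeability makes them all equal, hence each is `k/(m+1)`.
-/

open Finset
open scoped ENNReal

theorem List.getElem_lt_iff_lt_countP {α : Type*} [LinearOrder α] {l : List α}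
    (hl : l.Pairwise (· ≤ ·)) (x : α) {i : ℕ} (hi : i < l.length) :
    l[i] < x ↔ i < l.countP (· < x) := by
  induction l generalizing i with
  | nil => simp at hi
  | cons a t ih =>
    rw [List.pairwise_cons] at hl
    by_cases hax : a < x
    · cases i with
      | zero => simp [hax]
      | succ i => simp [hax, ih hl.2 (by simpa using hi)]
    · have hge : ∀ b ∈ a :: t, x ≤ b := by
        simpa using ⟨not_lt.1 hax, fun b hb => (not_lt.1 hax).trans (hl.1 b hb)⟩
      have hcount : (a :: t).countP (· < x) = 0 :=
        List.countP_eq_zero.2 fun b hb => by simpa using hge b hb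
      simp [hcount, hge _ (List.getElem_mem hi)]

theorem le_orderStat_iff {m : ℕ} (s : Fin m → ℝ) {k : ℕ} (hk1 : 1 ≤ k) (hkm : k ≤ m) (x : ℝ) :
    x ≤ orderStat s k ↔ #{i | s i < x} < k := by
  set l := Multiset.sort (Multiset.map s univ.val) (· ≤ ·)
  have hidx : k - 1 < l.length := by simp [l]; omega
  have hcount : l.countP (· < x) = #{i | s i < x} := by
    rw [← Multiset.coe_countP, Multiset.sort_eq, Multiset.countP_map]
    rfl
  rw [orderStat, List.getD_eq_getElem _ _ hidx, ← not_lt,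
    List.getElem_lt_iff_lt_countP (Multiset.pairwise_sort _ _) x hidx, hcount]
  omega

section

variable {n : ℕ}

noncomputable def rank (v : Fin n → ℝ) (j : Fin n) : ℕ :=
  #{i | v i < v j}

theorem rank_lt (v : Fin n → ℝ) (j : Fin n) : rank v j < n := by
  have : #{i | v i < v j} < #(univ : Finset (Fin n)) :=
    card_lt_card (filter_ssubset.2 ⟨j, mem_univ j, lt_irrefl _⟩)
  simpa [rank] using this

theorem rank_lt_rank {v : Fin n → ℝ} {j j' : Fin n} (h : v j < v j') : rank v j < rank v j' :=
  card_lt_card <| (ssubset_iff_of_subset fun i hi => by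
    simp only [mem_filter, mem_univ, true_and] at hi ⊢; exact hi.trans h).2
      ⟨j, by simpa using h, by simp⟩

theorem rank_injective {v : Fin n → ℝ} (hv : Function.Injective v) :
    Function.Injective (rank v) := by
  intro j j' h
  rcases lt_trichotomy (v j) (v j') with hlt | heq | hgt
  · exact absurd h (rank_lt_rank hlt).ne
  · exact hv heq
  · exact absurd h (rank_lt_rank hgt).ne'

theorem image_rank {v : Fin n → ℝ} (hv : Function.Injective v) : univ.image (rank v) = range n :=
  eq_of_subset_of_card_le (fun _ hr => by
      obtain ⟨j, -, rfl⟩ := mem_image.1 hr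
      exact mem_range.2 (rank_lt v j))
    (by simp [card_image_of_injective _ (rank_injective hv)])

theorem card_rank_lt {v : Fin n → ℝ} (hv : Function.Injective v) {k : ℕ} (hk : k ≤ n) :
    #{j | rank v j < k} = k := by
  rw [← card_image_of_injective _ (rank_injective hv), ← filter_image (p := (· < k)),
    image_rank hv, show (range n).filter (· < k) = range k by ext; simp; omega, card_range]

theorem rank_comp_perm (v : Fin n → ℝ) (σ : Equiv.Perm (Fin n)) (j : Fin n) :
    rank (v ∘ σ) j = rank v (σ j) := by
  simp only [rank, card_filter, Function.comp_apply]
  exact Equiv.sum_comp σ (fun i => if v i < v (σ j) then 1 else 0)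

theorem rank_last {m : ℕ} (v : Fin (m + 1) → ℝ) :
    rank v (Fin.last m) = #{i : Fin m | v i.castSucc < v (Fin.last m)} := by
  simp only [rank, card_filter, Fin.sum_univ_castSucc, lt_irrefl, if_false, add_zero]

theorem last_le_orderStat_iff {m k : ℕ} (hk1 : 1 ≤ k) (hkm : k ≤ m) (v : Fin (m + 1) → ℝ) :
    v (Fin.last m) ≤ orderStat (fun i : Fin m => v i.castSucc) k ↔ rank v (Fin.last m) < k := by
  rw [le_orderStat_iff _ hk1 hkm, rank_last]

theorem measurableSet_rank_lt (j : Fin n) (k : ℕ) :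
    MeasurableSet {v : Fin n → ℝ | rank v j < k} := by
  have : Measurable fun v : Fin n → ℝ => rank v j := by
    simp only [rank, card_filter]
    exact Finset.measurable_sum _ fun i _ => Measurable.ite
      (measurableSet_lt (measurable_pi_apply i) (measurable_pi_apply j))
      measurable_const measurable_const
  exact this measurableSet_Iio

theorem MeasureTheory.sum_measure_eq_of_ae_card_eq {Ω ι : Type*} [MeasurableSpace Ω]
    [Fintype ι] {μ : Measure Ω} {A : ι → Set Ω} [∀ i ω, Decidable (ω ∈ A i)]
    (hA : ∀ i, MeasurableSet (A i))
    {k : ℕ} (h : ∀ᵐ ω ∂μ, #{i | ω ∈ A i} = k) :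
    ∑ i, μ (A i) = k * μ Set.univ := by
  calc ∑ i, μ (A i) = ∫⁻ ω, ∑ i, (A i).indicator 1 ω ∂μ := by
        rw [lintegral_finsetSum _ fun i _ => measurable_one.indicator (hA i)]
        simp only [lintegral_indicator_one (hA _)]
    _ = ∫⁻ _, (k : ℝ≥0∞) ∂μ := by
        refine lintegral_congr_ae (h.mono fun ω hω => ?_)
        rw [← hω, card_filter, Nat.cast_sum]
        simp [Set.indicator_apply]
    _ = k * μ Set.univ := lintegral_const _

theorem Exchangeable.measure_preimage_comp_perm {Ω : Type*} [MeasurableSpace Ω] {ℙ : Measure Ω}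
    {S : Fin n → Ω → ℝ} (hS : Exchangeable ℙ S) (hmeas : ∀ i, Measurable (S i))
    (σ : Equiv.Perm (Fin n)) {B : Set (Fin n → ℝ)} (hB : MeasurableSet B) :
    ℙ {ω | (fun i => S (σ i) ω) ∈ B} = ℙ {ω | (fun i => S i ω) ∈ B} := by
  have := congrArg (· B) (hS σ)
  rwa [Measure.map_apply (measurable_pi_lambda _ fun i => hmeas _) hB,
    Measure.map_apply (measurable_pi_lambda _ hmeas) hB] at this

theorem Exchangeable.measure_rank_lt {Ω : Type*} [MeasurableSpace Ω] {ℙ : Measure Ω}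
    [IsProbabilityMeasure ℙ] {S : Fin n → Ω → ℝ} (hS : Exchangeable ℙ S)
    (hmeas : ∀ i, Measurable (S i))
    (hdist : ∀ᵐ ω ∂ℙ, ∀ i j : Fin n, i ≠ j → S i ω ≠ S j ω) (j : Fin n) {k : ℕ} (hk : k ≤ n) :
    ℙ {ω | rank (fun i => S i ω) j < k} = k / n := by
  have hswap : ∀ i,
      ℙ {ω | rank (fun l => S l ω) i < k} = ℙ {ω | rank (fun l => S l ω) j < k} := by
    intro i
    have hset : {ω | rank (fun l => S l ω) i < k} =
        {ω | (fun l => S (Equiv.swap j i l) ω) ∈ {v | rank v j < k}} := by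
      ext ω
      change _ ↔ rank ((fun l => S l ω) ∘ Equiv.swap j i) j < k
      rw [rank_comp_perm, Equiv.swap_apply_left]
      exact Iff.rfl
    rw [hset, hS.measure_preimage_comp_perm hmeas _ (measurableSet_rank_lt j k)]
    rfl
  have hsum : ∑ i, ℙ {ω | rank (fun l => S l ω) i < k} = k := by
    rw [sum_measure_eq_of_ae_card_eq (A := fun i => {ω | rank (fun l => S l ω) i < k})
      (fun i => (measurable_pi_lambda _ hmeas) (measurableSet_rank_lt i k)), measure_univ, mul_one]
    filter_upwards [hdist] with ω hω
    exact card_rank_lt (fun i i' h => not_imp_not.1 (hω i i') h) hk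
  rw [Finset.sum_congr rfl fun i _ => hswap i, sum_const, card_univ, Fintype.card_fin,
    nsmul_eq_mul] at hsum
  rwa [ENNReal.eq_div_iff (by simpa using j.pos.ne') (by simp)]

end

theorem split_conformal_coverage_sharp_general
    {Ω : Type*} [MeasurableSpace Ω] (ℙ : Measure Ω) [IsProbabilityMeasure ℙ]
    (α : ℝ) (hα : α ∈ Set.Ioo (0 : ℝ) 1) (m : ℕ)
    (k : ℕ) (hkdef : k = ⌈((m : ℝ) + 1) * (1 - α)⌉₊) (hk : k ≤ m)
    (S : Fin (m + 1) → Ω → ℝ) (hmeas : ∀ i, Measurable (S i))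
    (hexch : Exchangeable ℙ S)
    (hdist : ∀ᵐ ω ∂ℙ, ∀ i j : Fin (m + 1), i ≠ j → S i ω ≠ S j ω) :
    (ℙ {ω | S (Fin.last m) ω ≤
        orderStat (fun i : Fin m => S i.castSucc ω) k}).toReal = (k : ℝ) / ((m : ℝ) + 1) ∧
      1 - α ≤ (ℙ {ω | S (Fin.last m) ω ≤
        orderStat (fun i : Fin m => S i.castSucc ω) k}).toReal ∧
      (ℙ {ω | S (Fin.last m) ω ≤
        orderStat (fun i : Fin m => S i.castSucc ω) k}).toReal <
        1 - α + 1 / ((m : ℝ) + 1) := by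
  have hpos : (0 : ℝ) < m + 1 := by positivity
  have hα1 : 0 < 1 - α := by linarith [hα.2]
  have hk1 : 1 ≤ k := hkdef ▸ Nat.one_le_iff_ne_zero.2 (Nat.ceil_pos.2 (mul_pos hpos hα1)).ne'
  have hcov : (ℙ {ω | S (Fin.last m) ω ≤ orderStat (fun i : Fin m => S i.castSucc ω) k}).toReal
      = k / (m + 1) := by
    rw [show {ω | S (Fin.last m) ω ≤ orderStat (fun i : Fin m => S i.castSucc ω) k}
        = {ω | rank (fun i => S i ω) (Fin.last m) < k} from
          Set.ext fun ω => last_le_orderStat_iff hk1 hk fun i => S i ω,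
      hexch.measure_rank_lt hmeas hdist _ (by omega), ENNReal.toReal_div,
      ENNReal.toReal_natCast, ENNReal.toReal_natCast, Nat.cast_succ]
  have hceil_le : (m + 1) * (1 - α) ≤ k := hkdef ▸ Nat.le_ceil _
  have hceil_lt : (k : ℝ) < (m + 1) * (1 - α) + 1 :=
    hkdef ▸ Nat.ceil_lt_add_one (mul_nonneg hpos.le hα1.le)
  refine ⟨hcov, ?_, ?_⟩ <;> rw [hcov]
  · rwa [le_div_iff₀ hpos, mul_comm]
  · rwa [div_lt_iff₀ hpos, add_mul, one_div_mul_cancel hpos.ne', mul_comm]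

/-- **Sharp form of the exact recovery theorem.**
For exchangeable, almost surely pairwise distinct scores `S 0, …, S m`, with
`k = ⌈(m+1)(1-α)⌉ ≤ m` and `q̂` the `k`-th order statistic of the first `m` scores, the
coverage probability equals exactly `k/(m+1)`, hence lies in `[1-α, 1-α+1/(m+1))`. -/
theorem split_conformal_coverage_sharp
    {Ω : Type*} [MeasurableSpace Ω] (ℙ : Measure Ω) [IsProbabilityMeasure ℙ]
    (α : ℝ) (hα : α ∈ Set.Ioo (0 : ℝ) 1) (m : ℕ) (hm : 1 ≤ m)
    (k : ℕ) (hkdef : k = ⌈((m : ℝ) + 1) * (1 - α)⌉₊) (hk : k ≤ m)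
    (S : Fin (m + 1) → Ω → ℝ) (hmeas : ∀ i, Measurable (S i))
    (hexch : Exchangeable ℙ S)
    (hdist : ∀ᵐ ω ∂ℙ, ∀ i j : Fin (m + 1), i ≠ j → S i ω ≠ S j ω) :
    (ℙ {ω | S (Fin.last m) ω ≤
        orderStat (fun i : Fin m => S i.castSucc ω) k}).toReal = (k : ℝ) / ((m : ℝ) + 1) ∧
      1 - α ≤ (ℙ {ω | S (Fin.last m) ω ≤
        orderStat (fun i : Fin m => S i.castSucc ω) k}).toReal ∧
      (ℙ {ω | S (Fin.last m) ω ≤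
        orderStat (fun i : Fin m => S i.castSucc ω) k}).toReal <
        1 - α + 1 / ((m : ℝ) + 1) :=
  split_conformal_coverage_sharp_general ℙ α hα m k hkdef hk S hmeas hexch hdist
end
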